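/- If B is a subterm of a pure closed βη-normal form A of type τ, then the type of B is a subtype of τ, and the type of every free variable of B is a subtype of τ. -/
import Mathlib


/-- Simple types over the single ground type `N`. -/
inductive Ty : Type
  | N : Ty
  | arrow : Ty → Ty → Ty
deriving DecidableEq

/-- Terms of the simply-typed lambda calculus over ground type `N` (no constants).
Variables carry a name and a type; `lam n σ b` binds the variable `(n, σ)` in `b`. -/
inductive Tm : Type
  | var : ℕ → Ty → Tm
  | app : Tm → Tm → Tm
  | lam : ℕ → Ty → Tm → Tm
deriving DecidableEq

/-- The free variables of a term, as a finite set of (name, type) pairs. -/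
def Tm.FV : Tm → Finset (ℕ × Ty)
  | .var n τ => {(n, τ)}
  | .app f a => f.FV ∪ a.FV
  | .lam n σ b => b.FV.erase (n, σ)

/-- Type assignment: `A.ty = some τ` iff `A` is well-typed with type `τ`. -/
def Tm.ty : Tm → Option Ty
  | .var _ τ => some τ
  | .app f a =>
      match f.ty, a.ty with
      | some (.arrow σ τ), some σ' => if σ = σ' then some τ else none
      | _, _ => none
  | .lam _ σ b => (b.ty).map (Ty.arrow σ)

/-- `A.nf` means that `A` is a βη-normal form: it contains no β-redex
`(λx.M) N` and no η-redex `λx. (M x)` with `x` not free in `M`. -/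
def Tm.nf : Tm → Prop
  | .var _ _ => True
  | .app f a => f.nf ∧ a.nf ∧ ¬ ∃ n σ b, f = Tm.lam n σ b
  | .lam n σ b => b.nf ∧ ¬ ∃ M, b = Tm.app M (Tm.var n σ) ∧ (n, σ) ∉ M.FV

/-- The subtype relation on simple types: `σ` is a subtype of `N` iff `σ = N`;
`σ` is a subtype of `τ₁ → τ₂` iff `σ` is a subtype of `τ₁`, or of `τ₂`, or `σ = τ₁ → τ₂`. -/
def Subty (σ : Ty) : Ty → Prop
  | .N => σ = .N
  | .arrow a b => Subty σ a ∨ Subty σ b ∨ σ = .arrow a b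

/-- The subterm relation. -/
inductive Subtm : Tm → Tm → Prop
  | refl (a : Tm) : Subtm a a
  | lam {b : Tm} {n : ℕ} {σ : Ty} {c : Tm} : Subtm b c → Subtm b (Tm.lam n σ c)
  | appL {b f a : Tm} : Subtm b f → Subtm b (Tm.app f a)
  | appR {b f a : Tm} : Subtm b a → Subtm b (Tm.app f a)

theorem subty_refl (σ : Ty) : Subty σ σ := by
  cases σ with
  | N => rfl
  | arrow a b => exact Or.inr (Or.inr rfl)

theorem subty_trans {a b c : Ty} (h1 : Subty a b) (h2 : Subty b c) : Subty a c := by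
  induction c with
  | N =>
    cases b with
    | N => exact h1
    | arrow => simp [Subty] at h2
  | arrow t1 t2 ih1 ih2 =>
    rcases h2 with h | h | h
    · exact Or.inl (ih1 h)
    · exact Or.inr (Or.inl (ih2 h))
    · subst h; exact h1

theorem subty_arrow {a b τ : Ty} (h : Subty (Ty.arrow a b) τ) : Subty a τ ∧ Subty b τ := by
  induction τ with
  | N => simp [Subty] at h
  | arrow t1 t2 ih1 ih2 =>
    rcases h with h | h | h
    · exact ⟨Or.inl (ih1 h).1, Or.inl (ih1 h).2⟩
    · exact ⟨Or.inr (Or.inl (ih2 h).1), Or.inr (Or.inl (ih2 h).2)⟩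
    · injection h with h1 h2; subst h1; subst h2
      exact ⟨Or.inl (subty_refl _), Or.inr (Or.inl (subty_refl _))⟩

theorem subty_right {a b : Ty} : Subty b (Ty.arrow a b) :=
  Or.inr (Or.inl (subty_refl b))

theorem ty_app_inv {f a : Tm} {ρ : Ty} (h : (Tm.app f a).ty = some ρ) :
    ∃ σ, f.ty = some (Ty.arrow σ ρ) ∧ a.ty = some σ := by
  unfold Tm.ty at h
  cases hf : f.ty with
  | none => rw [hf] at h; simp at h
  | some μ =>
    cases μ with
    | N => rw [hf] at h; cases ha : a.ty <;> rw [ha] at h <;> simp at h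
    | arrow σ τ =>
      cases ha : a.ty with
      | none => rw [hf, ha] at h; simp at h
      | some σ' =>
        rw [hf, ha] at h
        by_cases he : σ = σ'
        · subst he; simp at h; subst h; exact ⟨σ, rfl, rfl⟩
        · simp [he] at h

theorem spine (A : Tm) : ∀ (_ : A.nf) (_ : ¬ ∃ n σ b, A = Tm.lam n σ b)
    (ρ : Ty) (_ : A.ty = some ρ),
    ∃ v ∈ A.FV, Subty ρ v.2 := by
  induction A with
  | var n σ =>
    intro hnf hne ρ hty
    simp [Tm.ty] at hty; subst hty
    exact ⟨(n, σ), by simp [Tm.FV], subty_refl _⟩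
  | app f a ihf iha =>
    intro hnf hne ρ hty
    obtain ⟨hfnf, hanf, hnl⟩ := hnf
    obtain ⟨σ, hfty, haty⟩ := ty_app_inv hty
    obtain ⟨v, hv, hvs⟩ := ihf hfnf hnl _ hfty
    refine ⟨v, ?_, subty_trans subty_right hvs⟩
    simp [Tm.FV]; exact Or.inl hv
  | lam n σ b ih => exact fun _ hne => absurd ⟨n, σ, b, rfl⟩ hne

theorem main_lemma (A : Tm) : ∀ (_ : A.nf) (ρ : Ty) (_ : A.ty = some ρ) (τ : Ty)
    (_ : Subty ρ τ) (_ : ∀ v ∈ A.FV, Subty v.2 τ)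
    (B : Tm) (_ : Subtm B A),
    ∃ σ, B.ty = some σ ∧ Subty σ τ ∧ ∀ v ∈ B.FV, Subty v.2 τ := by
  induction A with
  | var n σ =>
    intro hnf ρ hty τ hst hfv B hsub
    cases hsub
    exact ⟨ρ, hty, hst, hfv⟩
  | lam n σ b ih =>
    intro hnf ρ hty τ hst hfv B hsub
    obtain ⟨hbnf, _⟩ := hnf
    simp [Tm.ty] at hty
    obtain ⟨ρ', hbty, hρ⟩ := hty
    subst hρ
    have harr := subty_arrow hst
    have hfv' : ∀ v ∈ b.FV, Subty v.2 τ := by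
      intro v hv
      by_cases hv' : v = (n, σ)
      · subst hv'; exact harr.1
      · exact hfv v (Finset.mem_erase.mpr ⟨hv', hv⟩)
    cases hsub with
    | refl => exact ⟨Ty.arrow σ ρ', by simp [Tm.ty, hbty], hst, hfv⟩
    | lam h => exact ih hbnf ρ' hbty τ harr.2 hfv' B h
  | app f a ihf iha =>
    intro hnf ρ hty τ hst hfv B hsub
    obtain ⟨hfnf, hanf, hnl⟩ := hnf
    obtain ⟨σ, hfty, haty⟩ := ty_app_inv hty
    obtain ⟨v, hv, hvs⟩ := spine f hfnf hnl _ hfty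
    have hvτ : Subty v.2 τ := hfv v (by simp [Tm.FV]; exact Or.inl hv)
    have hfτ : Subty (Ty.arrow σ ρ) τ := subty_trans hvs hvτ
    have harr := subty_arrow hfτ
    have hfvf : ∀ v ∈ f.FV, Subty v.2 τ := fun v hv =>
      hfv v (by simp [Tm.FV]; exact Or.inl hv)
    have hfva : ∀ v ∈ a.FV, Subty v.2 τ := fun v hv =>
      hfv v (by simp [Tm.FV]; exact Or.inr hv)
    cases hsub with
    | refl => exact ⟨ρ, hty, hst, hfv⟩
    | appL h => exact ihf hfnf _ hfty τ hfτ hfvf B h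
    | appR h => exact iha hanf _ haty τ harr.1 hfva B h

theorem subterm_subtype (A : Tm) (τ : Ty)
    (hnf : A.nf) (hty : A.ty = some τ) (hclosed : A.FV = ∅)
    (B : Tm) (hsub : Subtm B A) :
    ∃ σ, B.ty = some σ ∧ Subty σ τ ∧ ∀ v ∈ B.FV, Subty v.2 τ := by
  exact main_lemma A hnf τ hty τ (subty_refl τ)
    (by simp [hclosed]) B hsub
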